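/- Let p be a positive integer, θ > 0, R > 0 real numbers, N ∈ ℝᵖ a vector with all components Nⱼ > 0, and h ∈ ℝᵖ. Then the (p+1)×(p+1) real block matrix whose (1,1) entry is 1/θ, whose first row (resp. column) continues with −hᵀ/θ (resp. −h/θ), and whose lower-right p×p block is hhᵀ/θ − (R/(Σⱼ Nⱼ))·𝟙𝟙ᵀ + diag(R/N₁, …, R/N_p), is positive semidefinite (here 𝟙 denotes the all-ones vector in ℝᵖ). -/

import Mathlib

/-!
Writing `S = ∑ⱼ Nⱼ` and `w = (1, -h)`, the matrix splits as
`θ⁻¹ • w wᵀ + (0 ⊕ R • (diag(N⁻¹) - S⁻¹ • 𝟙𝟙ᵀ))`. The first summand is a nonnegative multiple of a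
Gram matrix; the quadratic form of the second block is `R (∑ yⱼ² / Nⱼ - (∑ yⱼ)² / S)`, which is
nonnegative by the Cauchy–Schwarz inequality in Sedrakyan's form.
-/

open Matrix

namespace Matrix

theorem PosSemidef.fromBlocks_zero₁₂_zero₂₁ {m n R : Type*} [Fintype m] [Fintype n]
    [Ring R] [PartialOrder R] [StarRing R] [AddLeftMono R]
    {A : Matrix m m R} {D : Matrix n n R} (hA : A.PosSemidef) (hD : D.PosSemidef) :
    (fromBlocks A 0 0 D).PosSemidef := by
  refine .of_dotProduct_mulVec_nonneg (hA.isHermitian.fromBlocks (by simp) hD.isHermitian)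
    fun x => ?_
  rw [fromBlocks_mulVec, dotProduct_block]
  simp only [zero_mulVec, add_zero, zero_add, Sum.elim_comp_inl, Sum.elim_comp_inr]
  exact add_nonneg (hA.dotProduct_mulVec_nonneg (x ∘ Sum.inl))
    (hD.dotProduct_mulVec_nonneg (x ∘ Sum.inr))

theorem posSemidef_diagonal_inv_sub_inv_sum_smul_vecMulVec_one {ι : Type*} [Fintype ι]
    [DecidableEq ι] {N : ι → ℝ} (hN : ∀ i, 0 < N i) :
    (diagonal N⁻¹ - (∑ i, N i)⁻¹ • vecMulVec 1 1).PosSemidef := by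
  refine .of_dotProduct_mulVec_nonneg ?_ fun x => ?_
  · have hones : (vecMulVec 1 1 : Matrix ι ι ℝ).IsHermitian := by
      simpa using (posSemidef_vecMulVec_self_star (1 : ι → ℝ)).isHermitian
    exact (isHermitian_diagonal _).sub (hones.smul (IsSelfAdjoint.all _))
  · have hdiag : x ⬝ᵥ (diagonal N⁻¹ *ᵥ x) = ∑ i, x i ^ 2 / N i := by
      simp only [dotProduct, mulVec_diagonal, Pi.inv_apply]
      exact Finset.sum_congr rfl fun i _ => by ring
    have hones : x ⬝ᵥ (vecMulVec 1 1 *ᵥ x) = (∑ i, x i) ^ 2 := by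
      simp [dotProduct, mulVec, vecMulVec, ← Finset.sum_mul, sq]
    rw [star_trivial, sub_mulVec, smul_mulVec, dotProduct_sub, dotProduct_smul, hdiag, hones,
      smul_eq_mul, sub_nonneg, inv_mul_eq_div]
    exact Finset.sq_sum_div_le_sum_sq_div Finset.univ x fun i _ => hN i

end Matrix

theorem stmt_4_general (p : ℕ) (θ R : ℝ) (hθ : 0 < θ) (hR : 0 < R)
    (N h : Fin p → ℝ) (hN : ∀ j, 0 < N j) :
    (Matrix.fromBlocks
        (Matrix.of fun (_ : Unit) (_ : Unit) => 1 / θ)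
        (Matrix.of fun (_ : Unit) (j : Fin p) => -h j / θ)
        (Matrix.of fun (i : Fin p) (_ : Unit) => -h i / θ)
        (Matrix.of fun (i j : Fin p) =>
          h i * h j / θ - R / (∑ k, N k) +
            (if i = j then R / N i else 0))).PosSemidef := by
  let w : Unit ⊕ Fin p → ℝ := Sum.elim 1 (-h)
  have hgram : (θ⁻¹ • vecMulVec w (star w)).PosSemidef :=
    (posSemidef_vecMulVec_self_star w).smul (inv_nonneg.mpr hθ.le)
  have hblock : (fromBlocks (0 : Matrix Unit Unit ℝ) 0 0
      (R • (diagonal N⁻¹ - (∑ k, N k)⁻¹ • vecMulVec 1 1))).PosSemidef :=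
    PosSemidef.zero.fromBlocks_zero₁₂_zero₂₁
      ((posSemidef_diagonal_inv_sub_inv_sum_smul_vecMulVec_one hN).smul hR.le)
  convert hgram.add hblock using 1
  ext (_ | i) (_ | j) <;> simp [w, vecMulVec, diagonal_apply] <;> (try split_ifs) <;> ring

/-- The Hessian of the negative entropy of an ideal incompressible mixture is
positive semidefinite: with `θ > 0`, `R > 0`, `N ∈ ℝᵖ` componentwise positive
and `h ∈ ℝᵖ`, the `(p+1) × (p+1)` matrix with `(1,1)` entry `1/θ`, first
row/column continuing with `-hᵀ/θ` resp. `-h/θ`, and lower-right `p × p` block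
`hhᵀ/θ - (R/∑ⱼNⱼ)·𝟙𝟙ᵀ + diag(R/Nⱼ)`, is positive semidefinite. -/
theorem stmt_4 (p : ℕ) (hp : 0 < p) (θ R : ℝ) (hθ : 0 < θ) (hR : 0 < R)
    (N h : Fin p → ℝ) (hN : ∀ j, 0 < N j) :
    (Matrix.fromBlocks
        (Matrix.of fun (_ : Unit) (_ : Unit) => 1 / θ)
        (Matrix.of fun (_ : Unit) (j : Fin p) => -h j / θ)
        (Matrix.of fun (i : Fin p) (_ : Unit) => -h i / θ)
        (Matrix.of fun (i j : Fin p) =>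
          h i * h j / θ - R / (∑ k, N k) +
            (if i = j then R / N i else 0))).PosSemidef :=
  stmt_4_general p θ R hθ hR N h hN
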